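/- Suppose α ∈ DC(γ, τ) with γ > 0, τ > 1. Then for all positive integers H and N, ∑_{k=1}^{H} min(N, 1/‖kα‖_T) ≤ C·(γ^{-1/τ} H N^{1−1/τ} + H log N + N + N log N) for an absolute constant C. -/

import Mathlib

open Real

/-- Distance to the nearest integer. -/
noncomputable def dT (x : ℝ) : ℝ := |x - round x|

/-- Diophantine condition `DC(γ, τ)`. -/
def DC (γ τ α : ℝ) : Prop := ∀ k : ℤ, k ≠ 0 → γ / |(k : ℝ)| ^ τ ≤ dT (k * α)

/-- `min(N, 1/x)`, interpreted as `N` when `x = 0`. -/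
noncomputable def mterm (N x : ℝ) : ℝ := if x = 0 then N else min N (1 / x)

/-!
Take a Dirichlet approximation `|α - a/q| ≤ 1/(Nq)` with `q ≤ N`. Along any `q` consecutive
integers `n + r`, the points `(n + r)α` lie within `1/N` of the points `nα + ra/q`, which modulo 1
are `(m + φ)/q` for a fixed `φ ∈ [0,1)` and `m` running over all residues mod `q`. Hence each block
of length `q` contributes `O(N + q log q)`, and there are at most `H/q + 1` blocks. Finally, the
Diophantine condition at `k = q` gives `γ/q^τ ≤ ‖qα‖ ≤ 1/N`, i.e. `N/q ≤ γ^(-1/τ) N^(1-1/τ)`.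
-/

open Finset

lemma dT_nonneg (x : ℝ) : 0 ≤ dT x := abs_nonneg _

lemma dT_le_abs_sub_intCast (x : ℝ) (z : ℤ) : dT x ≤ |x - z| := round_le x z

lemma dT_add_intCast (x : ℝ) (z : ℤ) : dT (x + z) = dT x := by
  simp only [dT, round_add_intCast, Int.cast_add]
  ring_nf

lemma dT_le_add_abs_sub (x y : ℝ) : dT x ≤ dT y + |x - y| :=
  calc dT x ≤ |x - round y| := dT_le_abs_sub_intCast x (round y)
    _ ≤ |x - y| + |y - round y| := abs_sub_le x y ((round y : ℤ) : ℝ)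
    _ = dT y + |x - y| := add_comm _ _

lemma min_div_le_dT_add_div {m q : ℕ} (hm : m < q) {φ : ℝ} (hφ₀ : 0 ≤ φ) (hφ₁ : φ < 1) :
    (min m (q - 1 - m) : ℕ) / (q : ℝ) ≤ dT ((m + φ) / q) := by
  have hq : (0 : ℝ) < q := by exact_mod_cast hm.trans_le' (Nat.zero_le m)
  have hmq : (m : ℝ) + 1 ≤ q := by exact_mod_cast hm
  have hfract : Int.fract ((m + φ) / q) = (m + φ) / q :=
    Int.fract_eq_self.mpr ⟨by positivity, (div_lt_one hq).mpr (by linarith)⟩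
  rw [dT, abs_sub_round_eq_min, hfract]
  refine le_min ?_ ?_
  · have : ((min m (q - 1 - m) : ℕ) : ℝ) ≤ m := by exact_mod_cast min_le_left m (q - 1 - m)
    gcongr
    linarith
  · have : ((min m (q - 1 - m) : ℕ) : ℝ) ≤ q - 1 - m := by
      have h := min_le_right m (q - 1 - m)
      rw [← Nat.cast_le (α := ℝ), Nat.cast_sub (by omega), Nat.cast_sub (by omega)] at h
      simpa using h
    rw [le_sub_iff_add_le, ← add_div, div_le_one hq]
    linarith

lemma mterm_nonneg {N x : ℝ} (hN : 0 ≤ N) (hx : 0 ≤ x) : 0 ≤ mterm N x := by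
  unfold mterm
  split_ifs
  · exact hN
  · exact le_min hN (by positivity)

lemma mterm_le_left (N x : ℝ) : mterm N x ≤ N := by
  unfold mterm
  split_ifs
  exacts [le_rfl, min_le_left _ _]

lemma mterm_le_one_div {N x : ℝ} (hx : 0 < x) : mterm N x ≤ 1 / x := by
  rw [mterm, if_neg hx.ne']
  exact min_le_right _ _

noncomputable def residueWeight (N q μ : ℕ) : ℝ := if μ ≤ 1 then N else 2 * q / μ

lemma residueWeight_nonneg (N q μ : ℕ) : 0 ≤ residueWeight N q μ := by
  unfold residueWeight
  split_ifs <;> positivity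

lemma mterm_le_residueWeight {N q μ : ℕ} {d : ℝ} (hq : 0 < q) (hqN : q ≤ N)
    (hd : μ / (q : ℝ) - 1 / N ≤ d) : mterm N d ≤ residueWeight N q μ := by
  unfold residueWeight
  split_ifs with hμ
  · exact mterm_le_left _ _
  have hqR : (0 : ℝ) < q := by exact_mod_cast hq
  have hμ2 : (2 : ℝ) ≤ μ := by exact_mod_cast not_le.mp hμ
  have hqN' : (q : ℝ) ≤ N := by exact_mod_cast hqN
  -- `1/N ≤ 1/q ≤ μ/(2q)` because `μ ≥ 2`
  have hN : 1 / (N : ℝ) ≤ μ / (2 * q) := by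
    rw [div_le_div_iff₀ (by linarith) (by positivity)]
    nlinarith
  have hd' : μ / (2 * q) ≤ d := by
    have : μ / (q : ℝ) = μ / (2 * q) + μ / (2 * q) := by field_simp; ring
    linarith
  calc mterm N d ≤ 1 / d := mterm_le_one_div (lt_of_lt_of_le (by positivity) hd')
    _ ≤ 1 / (μ / (2 * q)) := one_div_le_one_div_of_le (by positivity) hd'
    _ = 2 * q / μ := one_div_div _ _

lemma sum_range_residueWeight_le (N q : ℕ) :
    ∑ m ∈ range q, residueWeight N q m ≤ 2 * N + 2 * q * (1 + Real.log q) := by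
  have hpoint (m : ℕ) :
      residueWeight N q m ≤ (if m ≤ 1 then (N : ℝ) else 0) + 2 * q * (m : ℝ)⁻¹ := by
    unfold residueWeight
    split_ifs
    · simp only [le_add_iff_nonneg_right]; positivity
    · rw [zero_add, div_eq_mul_inv]
  have hsmall : ∑ m ∈ range q, (if m ≤ 1 then (N : ℝ) else 0) ≤ 2 * N := by
    rw [sum_ite, sum_const_zero, add_zero, sum_const, nsmul_eq_mul]
    have : #{m ∈ range q | m ≤ 1} ≤ 2 :=
      (card_le_card fun m hm => by simp at hm ⊢; omega).trans_eq (card_range 2)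
    gcongr
    exact_mod_cast this
  -- the `m = 0` term vanishes since `(0 : ℝ)⁻¹ = 0`
  have hharmonic : ∑ m ∈ range q, (m : ℝ)⁻¹ ≤ 1 + Real.log q :=
    calc ∑ m ∈ range q, (m : ℝ)⁻¹ ≤ ∑ m ∈ insert 0 (Icc 1 q), (m : ℝ)⁻¹ :=
          sum_le_sum_of_subset_of_nonneg (fun m hm => by simp at hm ⊢; omega)
            (fun _ _ _ => by positivity)
      _ = harmonic q := by simp [harmonic_eq_sum_Icc]
      _ ≤ 1 + Real.log q := harmonic_le_one_add_log q
  calc ∑ m ∈ range q, residueWeight N q m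
      ≤ ∑ m ∈ range q, ((if m ≤ 1 then (N : ℝ) else 0) + 2 * q * (m : ℝ)⁻¹) :=
        sum_le_sum fun m _ => hpoint m
    _ = ∑ m ∈ range q, (if m ≤ 1 then (N : ℝ) else 0) + 2 * q * ∑ m ∈ range q, (m : ℝ)⁻¹ := by
        rw [sum_add_distrib, mul_sum]
    _ ≤ 2 * N + 2 * q * (1 + Real.log q) := by gcongr

lemma sum_range_min_sub_le {M : Type*} [AddCommMonoid M] [PartialOrder M]
    [IsOrderedAddMonoid M] {w : ℕ → M} (hw : ∀ m, 0 ≤ w m) (q : ℕ) :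
    ∑ m ∈ range q, w (min m (q - 1 - m)) ≤ 2 • ∑ m ∈ range q, w m :=
  calc ∑ m ∈ range q, w (min m (q - 1 - m)) ≤ ∑ m ∈ range q, (w m + w (q - 1 - m)) := by
        refine sum_le_sum fun m _ => ?_
        rcases le_total m (q - 1 - m) with h | h
        · rw [min_eq_left h]; exact le_add_of_nonneg_right (hw _)
        · rw [min_eq_right h]; exact le_add_of_nonneg_left (hw _)
    _ = 2 • ∑ m ∈ range q, w m := by
        rw [sum_add_distrib, sum_range_reflect w q, two_nsmul]

def residue (q : ℕ) (a L : ℤ) (r : ℕ) : ℕ := ((r * a + L) % q).toNat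

lemma natCast_residue {q : ℕ} (hq : 0 < q) (a L : ℤ) (r : ℕ) :
    (residue q a L r : ℤ) = (r * a + L) % q :=
  Int.toNat_of_nonneg (Int.emod_nonneg _ (by exact_mod_cast hq.ne'))

lemma residue_lt {q : ℕ} (hq : 0 < q) (a L : ℤ) (r : ℕ) : residue q a L r < q := by
  have h := Int.emod_lt_of_pos (r * a + L) (by exact_mod_cast hq : (0 : ℤ) < q)
  rw [← natCast_residue hq] at h
  exact_mod_cast h

lemma residue_injOn {q : ℕ} (hq : 0 < q) {a : ℤ} (ha : IsCoprime a q) (L : ℤ) :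
    Set.InjOn (residue q a L) (range q) := by
  intro r₁ hr₁ r₂ hr₂ h
  have hmod : (r₁ * a + L : ℤ) ≡ r₂ * a + L [ZMOD q] := by
    rw [Int.ModEq, ← natCast_residue hq, ← natCast_residue hq, h]
  have hr := Int.ModEq.cancel_right_div_gcd (by exact_mod_cast hq) (hmod.add_right_cancel' L)
  rw [Int.gcd_comm, Int.isCoprime_iff_gcd_eq_one.mp ha, Nat.cast_one, Int.ediv_one] at hr
  exact (Int.natCast_modEq_iff.mp hr).eq_of_lt_of_lt (mem_range.mp hr₁) (mem_range.mp hr₂)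

lemma add_mul_div_eq_residue {q : ℕ} (hq : 0 < q) (θ : ℝ) (a : ℤ) (r : ℕ) :
    θ + r * (a / q) = (residue q a ⌊q * θ⌋ r + Int.fract (q * θ)) / q
      + ((r * a + ⌊q * θ⌋) / (q : ℤ) : ℤ) := by
  have hq' : (q : ℝ) ≠ 0 := by exact_mod_cast hq.ne'
  set L := ⌊(q : ℝ) * θ⌋
  set φ := Int.fract ((q : ℝ) * θ)
  have hdiv : ((r * a + L : ℤ) : ℝ) = q * ((r * a + L) / (q : ℤ) : ℤ) + (residue q a L r : ℤ) := by
    rw [natCast_residue hq]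
    exact_mod_cast (Int.mul_ediv_add_emod _ _).symm
  have hfract : (L : ℝ) + φ = q * θ := Int.floor_add_fract _
  push_cast at hdiv
  field_simp
  linear_combination hdiv - hfract

lemma sum_range_mterm_le {q N : ℕ} (hq : 0 < q) (hqN : q ≤ N) {α : ℝ} {a : ℤ}
    (ha : IsCoprime a q) (hα : |α - a / q| ≤ 1 / (N * q)) (θ : ℝ) :
    ∑ r ∈ range q, mterm N (dT (θ + r * α)) ≤ 4 * N + 4 * q * (1 + Real.log q) := by
  set m := residue q a ⌊q * θ⌋
  set w : ℕ → ℝ := fun x => residueWeight N q (min x (q - 1 - x))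
  have hqR : (0 : ℝ) < q := by exact_mod_cast hq
  have hpoint : ∀ r ∈ range q, mterm N (dT (θ + r * α)) ≤ w (m r) := by
    intro r hr
    have hr : (r : ℝ) ≤ q := by exact_mod_cast (mem_range.mp hr).le
    have hnear : |θ + r * α - (θ + r * (a / q))| ≤ 1 / N :=
      calc |θ + r * α - (θ + r * (a / q))| = r * |α - a / q| := by
            rw [show θ + r * α - (θ + r * (a / q)) = r * (α - a / q) by ring, abs_mul,
              Nat.abs_cast]
        _ ≤ q * (1 / (N * q)) := by gcongr
        _ = 1 / N := by field_simp
    have hfar : (min (m r) (q - 1 - m r) : ℕ) / (q : ℝ) ≤ dT (θ + r * (a / q)) := by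
      rw [add_mul_div_eq_residue hq, dT_add_intCast]
      exact min_div_le_dT_add_div (residue_lt hq _ _ r) (Int.fract_nonneg _) (Int.fract_lt_one _)
    refine mterm_le_residueWeight hq hqN ?_
    linarith [dT_le_add_abs_sub (θ + r * (a / q)) (θ + r * α), abs_sub_comm (θ + r * α)
      (θ + r * (a / q))]
  calc ∑ r ∈ range q, mterm N (dT (θ + r * α)) ≤ ∑ r ∈ range q, w (m r) := sum_le_sum hpoint
    _ = ∑ x ∈ (range q).image m, w x := (sum_image (residue_injOn hq ha _)).symm
    _ ≤ ∑ x ∈ range q, w x :=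
        sum_le_sum_of_subset_of_nonneg
          (fun x hx => by
            obtain ⟨r, -, rfl⟩ := mem_image.mp hx
            exact mem_range.mpr (residue_lt hq _ _ r))
          (fun x _ _ => residueWeight_nonneg _ _ _)
    _ ≤ 2 • ∑ x ∈ range q, residueWeight N q x :=
        sum_range_min_sub_le (fun x => residueWeight_nonneg N q x) q
    _ ≤ 2 * (2 * N + 2 * q * (1 + Real.log q)) := by
        rw [two_nsmul, ← two_mul]
        gcongr
        exact sum_range_residueWeight_le N q
    _ = 4 * N + 4 * q * (1 + Real.log q) := by ring

lemma sum_range_le_of_sum_block_le {f : ℕ → ℝ} (hf : ∀ k, 0 ≤ f k) {q : ℕ} (hq : 0 < q)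
    {B : ℝ} (hB : ∀ n, ∑ r ∈ range q, f (n + r) ≤ B) (H : ℕ) :
    ∑ k ∈ range H, f k ≤ (H / q + 1) * B := by
  have hB₀ : 0 ≤ B := (sum_nonneg fun r _ => hf (0 + r)).trans (hB 0)
  have hblocks : ∀ J : ℕ, ∑ k ∈ range (J * q), f k ≤ J * B := by
    intro J
    induction J with
    | zero => simp
    | succ J ih =>
      rw [add_one_mul, sum_range_add, Nat.cast_succ, add_one_mul]
      exact add_le_add ih (hB _)
  calc ∑ k ∈ range H, f k ≤ ∑ k ∈ range ((H / q + 1) * q), f k :=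
        sum_le_sum_of_subset_of_nonneg
          (range_subset_range.mpr (by rw [add_one_mul]; exact (Nat.lt_div_mul_add hq).le))
          (fun k _ _ => hf k)
    _ ≤ ((H / q + 1 : ℕ) : ℝ) * B := hblocks _
    _ ≤ (H / q + 1) * B := by
        gcongr
        push_cast
        gcongr
        exact Nat.cast_div_le

lemma exists_isCoprime_abs_sub_div_le (α : ℝ) {N : ℕ} (hN : 0 < N) :
    ∃ (a : ℤ) (q : ℕ), 0 < q ∧ q ≤ N ∧ IsCoprime a q ∧ |α - a / q| ≤ 1 / (N * q) := by
  obtain ⟨b, hb, hbN⟩ := Real.exists_rat_abs_sub_le_and_den_le α hN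
  refine ⟨b.num, b.den, b.pos, hbN, ?_, ?_⟩
  · rw [Int.isCoprime_iff_gcd_eq_one]
    exact b.reduced
  · rw [← Rat.cast_def]
    refine hb.trans (one_div_le_one_div_of_le (by positivity) ?_)
    gcongr
    linarith

lemma DC.div_den_le {γ τ α : ℝ} (h : DC γ τ α) (hγ : 0 < γ) (hτ : 0 < τ) {a : ℤ} {q N : ℕ}
    (hq : 0 < q) (hN : 0 < N) (hα : |α - a / q| ≤ 1 / (N * q)) :
    (N : ℝ) / q ≤ γ ^ (-(1 / τ)) * (N : ℝ) ^ (1 - 1 / τ) := by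
  have hqR : (0 : ℝ) < q := by exact_mod_cast hq
  have hNR : (0 : ℝ) < N := by exact_mod_cast hN
  have hdT : dT (q * α) ≤ 1 / N :=
    calc dT (q * α) ≤ |q * α - a| := dT_le_abs_sub_intCast _ a
      _ = q * |α - a / q| := by
          rw [show (q : ℝ) * α - a = q * (α - a / q) by field_simp, abs_mul, Nat.abs_cast]
      _ ≤ q * (1 / (N * q)) := by gcongr
      _ = 1 / N := by field_simp
  have hDC := h q (by exact_mod_cast hq.ne')
  rw [Int.cast_natCast, abs_of_pos hqR] at hDC
  have hγN : γ * N ≤ (q : ℝ) ^ τ := by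
    have := hDC.trans hdT
    rw [div_le_div_iff₀ (by positivity) hNR] at this
    linarith
  have hq_low : (γ * N) ^ (1 / τ) ≤ (q : ℝ) := by
    have := Real.rpow_le_rpow (by positivity) hγN (by positivity : 0 ≤ 1 / τ)
    rwa [← Real.rpow_mul hqR.le, mul_one_div_cancel hτ.ne', Real.rpow_one] at this
  calc (N : ℝ) / q ≤ N / (γ * N) ^ (1 / τ) := by gcongr
    _ = γ ^ (-(1 / τ)) * (N : ℝ) ^ (1 - 1 / τ) := by
        rw [Real.mul_rpow hγ.le hNR.le, Real.rpow_neg hγ.le, Real.rpow_sub hNR, Real.rpow_one]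
        ring

lemma div_add_one_mul_block_le {H N q : ℕ} (hq : 0 < q) (hqN : q ≤ N) :
    ((H : ℝ) / q + 1) * (4 * N + 4 * q * (1 + Real.log q))
      ≤ 8 * ((H : ℝ) * N / q + H * Real.log N + N + N * Real.log N) := by
  have hqR : (0 : ℝ) < q := by exact_mod_cast hq
  have hqN' : (q : ℝ) ≤ N := by exact_mod_cast hqN
  have hlog : Real.log q ≤ Real.log N := Real.log_le_log hqR hqN'
  have hlogq : 0 ≤ Real.log q := Real.log_nonneg (by exact_mod_cast hq)
  have hH : (H : ℝ) ≤ H * N / q := by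
    rw [le_div_iff₀ hqR]
    exact mul_le_mul_of_nonneg_left hqN' (Nat.cast_nonneg H)
  have hexpand : ((H : ℝ) / q + 1) * (4 * N + 4 * q * (1 + Real.log q))
      = 4 * (H * N / q) + 4 * H + 4 * (H * Real.log q) + 4 * N + 4 * q + 4 * (q * Real.log q) := by
    field_simp
    ring
  rw [hexpand]
  have h1 : (H : ℝ) * Real.log q ≤ H * Real.log N := by gcongr
  have h2 : (q : ℝ) * Real.log q ≤ N * Real.log N := by gcongr
  have h3 : 0 ≤ (H : ℝ) * Real.log q := by positivity
  have h4 : 0 ≤ (q : ℝ) * Real.log q := by positivity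
  linarith

theorem stmt4 :
    ∃ C : ℝ, 0 < C ∧ ∀ (γ τ α : ℝ), 0 < γ → 1 < τ → DC γ τ α →
      ∀ H N : ℕ, 0 < H → 0 < N →
        ∑ k ∈ Finset.Icc 1 H, mterm N (dT ((k : ℝ) * α)) ≤
          C * (γ ^ (-(1 / τ)) * H * (N : ℝ) ^ (1 - 1 / τ) + H * Real.log N + N
            + N * Real.log N) := by
  refine ⟨8, by norm_num, fun γ τ α hγ hτ hDC H N _ hN => ?_⟩
  obtain ⟨a, q, hq, hqN, ha, hα⟩ := exists_isCoprime_abs_sub_div_le α hN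
  have hblock (n : ℕ) : ∑ r ∈ range q, mterm N (dT (((n + r + 1 : ℕ) : ℝ) * α))
      ≤ 4 * N + 4 * q * (1 + Real.log q) := by
    convert sum_range_mterm_le hq hqN ha hα ((n + 1) * α) using 4
    push_cast
    ring
  have hsum := sum_range_le_of_sum_block_le (fun k => mterm_nonneg (Nat.cast_nonneg N)
    (dT_nonneg (((k + 1 : ℕ) : ℝ) * α))) hq hblock H
  have hNq := mul_le_mul_of_nonneg_left (hDC.div_den_le hγ (by linarith) hq hN hα)
    (Nat.cast_nonneg (α := ℝ) H)
  rw [← Ico_add_one_right_eq_Icc, ← zero_add 1, ← sum_Ico_add', ← range_eq_Ico]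
  calc _ ≤ _ := hsum
    _ ≤ 8 * ((H : ℝ) * N / q + H * Real.log N + N + N * Real.log N) :=
        div_add_one_mul_block_le hq hqN
    _ ≤ _ := by rw [mul_div_assoc]; linarith
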